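/- Fix an integer s ≥ 2. Let X_1, X_2, … be an i.i.d. sequence of random variables with the Log-Logistic(α;0,1) distribution, α > 0, and for each i ∈ ℕ let Q_{i,s}^{LL*} = (1/2)·log(X_{(is, i(s+1)−1)}/X_{(i, i(s+1)−1)})/log(s) be computed from the first n = i(s+1)−1 observations. Then Q_{i,s}^{LL*} converges almost surely to 1/α as i → ∞. -/

import Mathlib

open MeasureTheory ProbabilityTheory Real Filter

/-- The `k`-th order statistic (1-based indexing) of the sample `x : Fin n → ℝ`. -/
noncomputable def orderStat (n : ℕ) (x : Fin n → ℝ) (k : ℕ) : ℝ :=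
  (Multiset.sort ((List.ofFn x : List ℝ) : Multiset ℝ) (· ≤ ·)).getD (k - 1) 0

/-- The cumulative distribution function of the Log-Logistic(α; 0, 1) distribution. -/
noncomputable def logLogisticCDF (α : ℝ) (x : ℝ) : ℝ :=
  if 0 < x then 1 / (1 + x ^ (-α)) else 0

/-!
The empirical distribution function converges almost surely at every rational point by the
strong law of large numbers, and the order statistic of rank `k` is `≤ t` exactly when at least
`k` sample points are `≤ t`. Hence an order statistic whose rank is asymptotically the fraction
`p` of the sample size converges almost surely to the point where the distribution function
crosses `p`. For the Log-Logistic law, the ranks `i s` and `i` in a sample of size `i (s + 1) - 1`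
give the crossing points `s ^ (1 / α)` and `s ^ (-1 / α)`, whose log-ratio is `2 log s / α`.
-/

open Finset Topology

theorem List.getD_le_iff_lt_countP_of_pairwise {α : Type*} [LinearOrder α] {l : List α}
    (hl : l.Pairwise (· ≤ ·)) {j : ℕ} (hj : j < l.length) (d t : α) :
    l.getD j d ≤ t ↔ j < l.countP (· ≤ t) := by
  induction l generalizing j with
  | nil => simp at hj
  | cons a l ih =>
    rw [List.pairwise_cons] at hl
    by_cases hat : a ≤ t
    · cases j with
      | zero => simp [hat]
      | succ j =>
        rw [List.getD_cons_succ, ih hl.2 (Nat.lt_of_succ_lt_succ hj)]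
        simp [hat]
    · have hcount : l.countP (· ≤ t) = 0 := by
        simp only [List.countP_eq_zero, decide_eq_true_eq]
        exact fun b hb hbt => hat ((hl.1 b hb).trans hbt)
      cases j with
      | zero => simp [hat, hcount]
      | succ j =>
        rw [List.getD_cons_succ, ih hl.2 (Nat.lt_of_succ_lt_succ hj)]
        simp [hat, hcount]

theorem orderStat_le_iff {n k : ℕ} (x : Fin n → ℝ) (t : ℝ) (hk₁ : 1 ≤ k) (hkn : k ≤ n) :
    orderStat n x k ≤ t ↔ k ≤ #{j | x j ≤ t} := by
  have hcount :
      (Multiset.sort (↑(List.ofFn x)) (· ≤ ·)).countP (· ≤ t) = #{j | x j ≤ t} := by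
    rw [← Multiset.coe_countP, Multiset.sort_eq, ← Fin.univ_val_map, Multiset.countP_map]
    rfl
  rw [orderStat, List.getD_le_iff_lt_countP_of_pairwise (Multiset.pairwise_sort _ _)
    (by rw [Multiset.length_sort, Multiset.coe_card, List.length_ofFn]; omega) 0 t, hcount]
  omega

noncomputable def empiricalCDF (x : ℕ → ℝ) (m : ℕ) (t : ℝ) : ℝ :=
  #{j : Fin m | x j ≤ t} / m

theorem lt_of_empiricalCDF_lt {x : ℕ → ℝ} {m k : ℕ} {t : ℝ}
    (h : empiricalCDF x m t < k / m) : #{j : Fin m | x j ≤ t} < k :=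
  lt_of_not_ge fun hk =>
    h.not_ge (div_le_div_of_nonneg_right (by exact_mod_cast hk) m.cast_nonneg)

theorem le_of_lt_empiricalCDF {x : ℕ → ℝ} {m k : ℕ} {t : ℝ}
    (h : (k : ℝ) / m < empiricalCDF x m t) : k ≤ #{j : Fin m | x j ≤ t} :=
  le_of_not_gt fun hk =>
    h.not_ge (div_le_div_of_nonneg_right (by exact_mod_cast hk.le) m.cast_nonneg)

theorem tendsto_orderStat_of_tendsto_empiricalCDF {x : ℕ → ℝ} {F : ℝ → ℝ} {p q : ℝ}
    (hx : ∀ t : ℚ, Tendsto (fun m => empiricalCDF x m t) atTop (𝓝 (F t)))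
    (hlt : ∀ t < q, F t < p) (hgt : ∀ t, q < t → p < F t)
    {n k : ℕ → ℕ} (hn : Tendsto n atTop atTop)
    (hk : ∀ᶠ i in atTop, 1 ≤ k i ∧ k i ≤ n i)
    (hkn : Tendsto (fun i => (k i : ℝ) / n i) atTop (𝓝 p)) :
    Tendsto (fun i => orderStat (n i) (fun j => x j) (k i)) atTop (𝓝 q) := by
  rw [tendsto_order]
  constructor
  · intro a ha
    obtain ⟨t, hat, htq⟩ := exists_rat_btwn ha
    have hgap := ((hx t).comp hn).sub hkn
    filter_upwards [hgap.eventually_lt_const (sub_neg.2 (hlt t htq)), hk] with i hi ⟨hk₁, hkn⟩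
    have hcard := lt_of_empiricalCDF_lt (sub_neg.1 hi)
    exact hat.trans (lt_of_not_ge fun h => hcard.not_ge ((orderStat_le_iff _ _ hk₁ hkn).1 h))
  · intro b hb
    obtain ⟨t, hqt, htb⟩ := exists_rat_btwn hb
    have hgap := hkn.sub ((hx t).comp hn)
    filter_upwards [hgap.eventually_lt_const (sub_neg.2 (hgt t hqt)), hk] with i hi ⟨hk₁, hkn⟩
    exact ((orderStat_le_iff _ _ hk₁ hkn).2 (le_of_lt_empiricalCDF (sub_neg.1 hi))).trans_lt htb

theorem tendsto_natCast_mul_div_mul_sub_one (c : ℕ) {d : ℕ} (hd : 0 < d) :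
    Tendsto (fun i : ℕ => ((i * c : ℕ) : ℝ) / ((i * d - 1 : ℕ) : ℝ)) atTop
      (𝓝 (c / d)) := by
  have hlim : Tendsto (fun i : ℕ => (c : ℝ) / (d - 1 / i)) atTop (𝓝 (c / (d - 0))) :=
    tendsto_const_nhds.div (tendsto_const_nhds.sub tendsto_one_div_atTop_nhds_zero_nat)
      (by simpa using hd.ne')
  rw [sub_zero] at hlim
  refine hlim.congr' ?_
  filter_upwards [eventually_ge_atTop 1] with i hi
  have hi₀ : (i : ℝ) ≠ 0 := by positivity
  rw [Nat.cast_sub (by nlinarith), ← mul_div_mul_right _ _ hi₀]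
  push_cast
  field_simp

theorem tendsto_orderStat_mul_of_tendsto_empiricalCDF {x : ℕ → ℝ} {F : ℝ → ℝ} {q : ℝ}
    {c d : ℕ} (hc : 0 < c) (hcd : c < d)
    (hx : ∀ t : ℚ, Tendsto (fun m => empiricalCDF x m t) atTop (𝓝 (F t)))
    (hlt : ∀ t < q, F t < c / d) (hgt : ∀ t, q < t → c / d < F t) :
    Tendsto (fun i => orderStat (i * d - 1) (fun j => x j) (i * c)) atTop (𝓝 q) := by
  refine tendsto_orderStat_of_tendsto_empiricalCDF hx hlt hgt ?_ ?_
    (tendsto_natCast_mul_div_mul_sub_one c (hc.trans hcd))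
  · exact tendsto_sub_atTop_nat 1 |>.comp (tendsto_id.atTop_mul_const' (by omega))
  · filter_upwards [eventually_ge_atTop 1] with i hi
    have hcd' : i * (c + 1) ≤ i * d := Nat.mul_le_mul_left i hcd
    rw [mul_add_one] at hcd'
    exact ⟨Nat.mul_pos hi hc, by omega⟩

section EmpiricalCDF

variable {Ω : Type*} [MeasurableSpace Ω] {μ : Measure Ω} [IsFiniteMeasure μ]

theorem identDistrib_of_forall_measure_le_eq {X Y : Ω → ℝ} (hX : Measurable X)
    (hY : Measurable Y) (h : ∀ x, μ {ω | X ω ≤ x} = μ {ω | Y ω ≤ x}) :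
    IdentDistrib X Y μ μ where
  aemeasurable_fst := hX.aemeasurable
  aemeasurable_snd := hY.aemeasurable
  map_eq := Measure.ext_of_Iic _ _ fun x => by
    rw [Measure.map_apply hX measurableSet_Iic, Measure.map_apply hY measurableSet_Iic]
    exact h x

theorem ae_tendsto_empiricalCDF {X : ℕ → Ω → ℝ} (hmeas : ∀ k, Measurable (X k))
    (hindep : Pairwise fun i j => X i ⟂ᵢ[μ] X j)
    (hident : ∀ i, IdentDistrib (X i) (X 0) μ μ) (t : ℝ) :
    ∀ᵐ ω ∂μ, Tendsto (fun m => empiricalCDF (X · ω) m t) atTop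
      (𝓝 (μ.real {ω | X 0 ω ≤ t})) := by
  set φ : ℝ → ℝ := (Set.Iic t).indicator 1
  have hφ : Measurable φ := measurable_one.indicator measurableSet_Iic
  have hS : MeasurableSet {ω | X 0 ω ≤ t} := hmeas 0 measurableSet_Iic
  have hY : φ ∘ X 0 = {ω | X 0 ω ≤ t}.indicator 1 := rfl
  have hint : Integrable (φ ∘ X 0) μ := hY ▸ (integrable_const 1).indicator hS
  have hmean : μ[φ ∘ X 0] = μ.real {ω | X 0 ω ≤ t} := hY ▸ integral_indicator_one hS
  have hslln := strong_law_ae_real (fun j => φ ∘ X j) hint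
    (fun i j hij => (hindep hij).comp hφ hφ) (fun i => (hident i).comp hφ)
  filter_upwards [hslln] with ω hω
  rw [hmean] at hω
  refine hω.congr fun m => ?_
  rw [empiricalCDF, ← Fin.sum_univ_eq_sum_range (fun j => (φ ∘ X j) ω)]
  simp only [φ, Function.comp_apply, Set.indicator_apply, Set.mem_Iic, Pi.one_apply, sum_boole]

theorem ae_forall_rat_tendsto_empiricalCDF {X : ℕ → Ω → ℝ} {F : ℝ → ℝ} (hF : ∀ x, 0 ≤ F x)
    (hmeas : ∀ k, Measurable (X k)) (hindep : iIndepFun X μ)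
    (hdist : ∀ k x, μ {ω | X k ω ≤ x} = ENNReal.ofReal (F x)) :
    ∀ᵐ ω ∂μ, ∀ t : ℚ, Tendsto (fun m => empiricalCDF (X · ω) m t) atTop (𝓝 (F t)) := by
  have hcdf : ∀ t, μ.real {ω | X 0 ω ≤ t} = F t := fun t => by
    rw [measureReal_def, hdist, ENNReal.toReal_ofReal (hF t)]
  refine ae_all_iff.2 fun t => ?_
  simpa only [hcdf] using ae_tendsto_empiricalCDF hmeas (fun i j hij => hindep.indepFun hij)
    (fun i => identDistrib_of_forall_measure_le_eq (hmeas i) (hmeas 0)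
      fun x => by rw [hdist, hdist]) t

end EmpiricalCDF

theorem logLogisticCDF_nonneg (α x : ℝ) : 0 ≤ logLogisticCDF α x := by
  unfold logLogisticCDF
  split_ifs <;> positivity

section LogLogistic

variable {α : ℝ}

theorem logLogisticCDF_lt_logLogisticCDF (hα : 0 < α) {x y : ℝ} (hy : 0 < y) (hxy : x < y) :
    logLogisticCDF α x < logLogisticCDF α y := by
  rw [logLogisticCDF, logLogisticCDF, if_pos hy]
  split_ifs with hx
  · have : y ^ (-α) < x ^ (-α) := Real.rpow_lt_rpow_of_neg hx hxy (neg_neg_of_pos hα)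
    gcongr
  · positivity

theorem logLogisticCDF_rpow_inv (hα : 0 < α) {y : ℝ} (hy : 0 < y) :
    logLogisticCDF α (y ^ α⁻¹) = y / (y + 1) := by
  rw [logLogisticCDF, if_pos (by positivity), ← Real.rpow_mul hy.le, inv_mul_eq_div,
    neg_div, div_self hα.ne', Real.rpow_neg_one]
  field_simp

theorem tendsto_orderStat_mul_of_tendsto_empiricalCDF_logLogistic (hα : 0 < α) {x : ℕ → ℝ}
    (hx : ∀ t : ℚ, Tendsto (fun m => empiricalCDF x m t) atTop (𝓝 (logLogisticCDF α t)))
    {y : ℝ} (hy : 0 < y) {c d : ℕ} (hc : 0 < c) (hcd : c < d) (hcdy : (c : ℝ) / d = y / (y + 1)) :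
    Tendsto (fun i => orderStat (i * d - 1) (fun j => x j) (i * c)) atTop (𝓝 (y ^ α⁻¹)) := by
  have hq : 0 < y ^ α⁻¹ := by positivity
  have hF : logLogisticCDF α (y ^ α⁻¹) = c / d := (logLogisticCDF_rpow_inv hα hy).trans hcdy.symm
  exact tendsto_orderStat_mul_of_tendsto_empiricalCDF hc hcd hx
    (fun t ht => hF ▸ logLogisticCDF_lt_logLogisticCDF hα hq ht)
    (fun t ht => hF ▸ logLogisticCDF_lt_logLogisticCDF hα (hq.trans ht) ht)

end LogLogistic

/-- For fixed `s ≥ 2` and an i.i.d. sequence from the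
Log-Logistic(α;0,1) distribution, the estimators
`Q_{i,s}^{LL*} = (1/2) log(X_{(is,n)}/X_{(i,n)}) / log s`,
computed from the first `n = i(s+1)-1` observations, converge almost surely
to `1/α` as `i → ∞`. -/
theorem stmt3 {Ω : Type*} [MeasurableSpace Ω] (μ : Measure Ω) [IsProbabilityMeasure μ]
    (s : ℕ) (hs : 2 ≤ s) (α : ℝ) (hα : 0 < α)
    (X : ℕ → Ω → ℝ) (hmeas : ∀ k, Measurable (X k))
    (hindep : iIndepFun X μ)
    (hdist : ∀ k x, μ {ω | X k ω ≤ x} = ENNReal.ofReal (logLogisticCDF α x)) :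
    ∀ᵐ ω ∂μ, Tendsto (fun i : ℕ =>
        (1 / 2) * Real.log
          (orderStat (i * (s + 1) - 1) (fun j => X j ω) (i * s) /
            orderStat (i * (s + 1) - 1) (fun j => X j ω) i) / Real.log s)
      atTop (nhds (1 / α)) := by
  have hs₁ : (1 : ℝ) < s := by exact_mod_cast hs
  have hs₀ : (0 : ℝ) < s := one_pos.trans hs₁
  filter_upwards [ae_forall_rat_tendsto_empiricalCDF (logLogisticCDF_nonneg α) hmeas hindep
    hdist] with ω hω
  have hupper := tendsto_orderStat_mul_of_tendsto_empiricalCDF_logLogistic hα hω hs₀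
    (c := s) (d := s + 1) (by omega) (by omega) (by push_cast; rfl)
  have hlower := tendsto_orderStat_mul_of_tendsto_empiricalCDF_logLogistic hα hω
    (inv_pos.2 hs₀) (c := 1) (d := s + 1) one_pos (by omega) (by push_cast; field_simp; ring)
  simp only [mul_one] at hlower
  have hval : 1 / 2 * Real.log (s ^ α⁻¹ / (s : ℝ)⁻¹ ^ α⁻¹) / Real.log s = 1 / α := by
    rw [Real.log_div (by positivity) (by positivity), Real.log_rpow hs₀,
      Real.log_rpow (inv_pos.2 hs₀), Real.log_inv]
    field_simp [(Real.log_pos hs₁).ne']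
    ring
  rw [← hval]
  exact (((hupper.div hlower (by positivity)).log (by positivity)).const_mul (1 / 2)).div_const _
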